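/- For complex ν with Re ν > 0 and real 0 < x ≤ 1, there is a constant C depending only on Re ν such that |K_ν(x)| ≤ C e^{π|Im ν|} x^{-Re ν}, where K_ν is given by the integral representation K_ν(x) = (π/2)^{1/2} x^ν e^{-x}/Γ(ν+1/2) ∫_0^∞ e^{-xτ}(τ+τ²/2)^{ν-1/2} dτ. -/

import Mathlib

open Complex MeasureTheory

/-- The modified Bessel function of the second kind for `Re ν > -1/2`, defined by the
integral representation
`K_ν(x) = (π/2)^{1/2} x^ν e^{-x} / Γ(ν+1/2) ∫_0^∞ e^{-xτ} (τ+τ²/2)^{ν-1/2} dτ`. -/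
noncomputable def besselK (ν : ℂ) (x : ℝ) : ℂ :=
  (Real.sqrt (Real.pi / 2) : ℂ) * (x : ℂ) ^ ν * Real.exp (-x) / Complex.Gamma (ν + 1 / 2)
    * ∫ τ in Set.Ioi (0 : ℝ),
        (Real.exp (-x * τ) : ℂ) * ((τ : ℂ) + (τ : ℂ) ^ 2 / 2) ^ (ν - 1 / 2)

/-!
On a vertical line `Re z = σ > 0` the Gamma function is bounded below by `c_σ e^{-π|Im z|}`.
For `0 < σ < 1` this is the reflection formula `Γ(z) Γ(1-z) = π / sin(πz)` together with
`|sin(πz)| ≤ e^{π|Im z|}` and `|Γ(1-z)| ≤ Γ(1-σ)`; on `σ = 1` the zero of `sin(π(z-1))` at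
`z = 1` is compensated by `Γ(z) = (z-1) Γ(z-1)`, using `sinh u ≤ u e^u`; and `Γ(z+1) = z Γ(z)`
with `|z| ≥ σ` carries the bound to every larger `σ`.

The integral only sees `p = Re ν - 1/2 > -1/2`: for `τ > 0`,
`(τ + τ²/2)^p ≤ 2^{|p|} (τ^{min(p, 2p)} + τ^{2p})`, and `∫₀^∞ τ^e e^{-xτ} dτ = Γ(e+1) x^{-e-1}`,
which is at most `Γ(e+1) x^{-(2p+1)} = Γ(e+1) x^{-2a}` for `x ≤ 1` since `e ≤ 2p`. Hence
`|K_ν(x)| ≲ e^{π|Im ν|} x^a x^{-2a}`.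
-/

open Set
open scoped Real

lemma Real.sinh_le_mul_exp (u : ℝ) : Real.sinh u ≤ u * Real.exp u := by
  have h := Real.add_one_le_exp (-(2 * u))
  have hsplit : Real.exp (-u) = Real.exp u * Real.exp (-(2 * u)) := by
    rw [← Real.exp_add]; ring_nf
  rw [Real.sinh_eq, hsplit]
  nlinarith [Real.exp_pos u]

namespace Complex

lemma norm_sin_le_exp_abs_im (z : ℂ) : ‖sin z‖ ≤ Real.exp |z.im| := by
  have hexp : ∀ w : ℂ, ‖exp (w * I)‖ ≤ Real.exp |w.im| := fun w => by
    rw [norm_exp]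
    exact Real.exp_le_exp.2 (by simpa using neg_le_abs w.im)
  calc ‖sin z‖ = ‖exp (-z * I) - exp (z * I)‖ / 2 := by simp [sin]
    _ ≤ (‖exp (-z * I)‖ + ‖exp (z * I)‖) / 2 := by gcongr; exact norm_sub_le _ _
    _ ≤ (Real.exp |z.im| + Real.exp |z.im|) / 2 := by
        gcongr
        · simpa using hexp (-z)
        · exact hexp z
    _ = Real.exp |z.im| := by ring

lemma norm_Gamma_le_Gamma_re {z : ℂ} (hz : 0 < z.re) : ‖Gamma z‖ ≤ Real.Gamma z.re := by
  rw [Gamma_eq_integral hz, Real.Gamma_eq_integral hz]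
  refine (norm_integral_le_integral_norm _).trans_eq
    (setIntegral_congr_fun measurableSet_Ioi fun x (hx : 0 < x) => ?_)
  rw [norm_mul, norm_real, Real.norm_of_nonneg (Real.exp_pos _).le,
    norm_cpow_eq_rpow_re_of_pos hx]
  simp

lemma norm_Gamma_mul_norm_Gamma_one_sub (z : ℂ) :
    ‖Gamma z‖ * ‖Gamma (1 - z)‖ = π / ‖sin (π * z)‖ := by
  rw [← norm_mul, Gamma_mul_Gamma_one_sub, norm_div, norm_real,
    Real.norm_of_nonneg Real.pi_pos.le]

lemma re_pow_mul_norm_Gamma_le {z : ℂ} (hz : 0 < z.re) (n : ℕ) :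
    z.re ^ n * ‖Gamma z‖ ≤ ‖Gamma (z + n)‖ := by
  induction n with
  | zero => simp
  | succ n ih =>
    have hre : z.re ≤ ‖z + n‖ :=
      calc z.re ≤ (z + n).re := by simp
        _ ≤ ‖z + n‖ := re_le_norm _
    have hne : z + n ≠ 0 := fun h => by simpa [h] using hz.trans_le hre
    calc z.re ^ (n + 1) * ‖Gamma z‖ = z.re * (z.re ^ n * ‖Gamma z‖) := by ring
      _ ≤ ‖z + n‖ * ‖Gamma (z + n)‖ := by gcongr
      _ = ‖Gamma (z + ↑(n + 1))‖ := by
        rw [← norm_mul, ← Gamma_add_one _ hne, Nat.cast_succ, add_assoc]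

lemma pi_mul_exp_neg_le_Gamma_mul_norm_Gamma {z : ℂ} (h0 : 0 < z.re) (h1 : z.re < 1) :
    π * Real.exp (-(π * |z.im|)) ≤ Real.Gamma (1 - z.re) * ‖Gamma z‖ := by
  have hsin : 0 < ‖sin (π * z)‖ := by
    refine norm_pos_iff.2 fun h => ?_
    obtain ⟨k, hk⟩ := sin_eq_zero_iff.1 h
    have hzk : z.re = k := by
      simpa using congrArg re (mul_left_cancel₀ (ofReal_ne_zero.2 Real.pi_ne_zero)
        (hk.trans (mul_comm _ _)))
    have hk0 : (0 : ℤ) < k := by exact_mod_cast hzk ▸ h0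
    have hk1 : k < 1 := by exact_mod_cast hzk ▸ h1
    omega
  have hsin_le : ‖sin (π * z)‖ ≤ Real.exp (π * |z.im|) := by
    simpa [abs_mul, abs_of_pos Real.pi_pos] using norm_sin_le_exp_abs_im (π * z)
  have hΓ : ‖Gamma (1 - z)‖ ≤ Real.Gamma (1 - z.re) := by
    simpa using norm_Gamma_le_Gamma_re (z := 1 - z) (by simpa using h1)
  calc π * Real.exp (-(π * |z.im|)) = π / Real.exp (π * |z.im|) := by
        rw [Real.exp_neg, div_eq_mul_inv]
    _ ≤ π / ‖sin (π * z)‖ := by gcongr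
    _ = ‖Gamma (1 - z)‖ * ‖Gamma z‖ := by
        rw [mul_comm ‖Gamma (1 - z)‖, norm_Gamma_mul_norm_Gamma_one_sub]
    _ ≤ Real.Gamma (1 - z.re) * ‖Gamma z‖ := by gcongr

lemma norm_sin_mul_I (t : ℝ) : ‖sin (t * I)‖ = Real.sinh |t| := by
  rw [sin_mul_I, norm_mul, norm_I, mul_one, ← ofReal_sinh, norm_real, Real.norm_eq_abs,
    Real.abs_sinh]

lemma exp_neg_le_norm_Gamma_of_re_eq_one {z : ℂ} (hz : z.re = 1) :
    Real.exp (-(π * |z.im|)) ≤ ‖Gamma z‖ := by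
  set t := z.im
  rcases eq_or_ne t 0 with ht | ht
  · have : z = 1 := ext (by simpa using hz) (by simpa using ht)
    simp [this, ht]
  set w : ℂ := t * I
  have hzw : z = w + 1 := ext (by simp [w, hz]) (by simp [w, t])
  have hw : w ≠ 0 := by simp [w, ht]
  have hsinh : 0 < Real.sinh (π * |t|) := Real.sinh_pos_iff.2 (by positivity)
  have hΓ : ‖Gamma (1 - w)‖ ≤ 1 := by
    simpa [w] using norm_Gamma_le_Gamma_re (z := 1 - w) (by simp [w])
  have hsin : ‖sin (π * w)‖ = Real.sinh (π * |t|) := by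
    rw [← mul_assoc, ← ofReal_mul, norm_sin_mul_I, abs_mul, abs_of_pos Real.pi_pos]
  calc Real.exp (-(π * |t|)) = |t| * π / (π * |t| * Real.exp (π * |t|)) := by
        rw [Real.exp_neg]; field_simp
    _ ≤ |t| * π / Real.sinh (π * |t|) := by
        gcongr; exact Real.sinh_le_mul_exp _
    _ = |t| * (‖Gamma w‖ * ‖Gamma (1 - w)‖) := by
        rw [norm_Gamma_mul_norm_Gamma_one_sub, hsin, mul_div_assoc]
    _ ≤ |t| * ‖Gamma w‖ := by gcongr; exact mul_le_of_le_one_right (norm_nonneg _) hΓ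
    _ = ‖Gamma z‖ := by rw [hzw, Gamma_add_one w hw, norm_mul]; simp [w]

lemma exists_mul_exp_neg_le_norm_Gamma_of_le_one {σ : ℝ} (h0 : 0 < σ) (h1 : σ ≤ 1) :
    ∃ c > 0, ∀ z : ℂ, z.re = σ → c * Real.exp (-(π * |z.im|)) ≤ ‖Gamma z‖ := by
  rcases h1.lt_or_eq with h1 | rfl
  · have hΓ : 0 < Real.Gamma (1 - σ) := Real.Gamma_pos_of_pos (by linarith)
    refine ⟨π / Real.Gamma (1 - σ), by positivity, fun z hz => ?_⟩
    rw [div_mul_eq_mul_div, div_le_iff₀' hΓ, ← hz]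
    exact pi_mul_exp_neg_le_Gamma_mul_norm_Gamma (hz ▸ h0) (hz ▸ h1)
  · exact ⟨1, one_pos, fun z hz => (one_mul _).trans_le (exp_neg_le_norm_Gamma_of_re_eq_one hz)⟩

lemma exists_mul_exp_neg_le_norm_Gamma {σ : ℝ} (hσ : 0 < σ) :
    ∃ c > 0, ∀ z : ℂ, z.re = σ → c * Real.exp (-(π * |z.im|)) ≤ ‖Gamma z‖ := by
  set n := ⌈σ⌉₊ - 1
  have hn : (n : ℝ) = ⌈σ⌉₊ - 1 := by
    rw [Nat.cast_sub (Nat.one_le_iff_ne_zero.2 (Nat.ceil_pos.2 hσ).ne'), Nat.cast_one]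
  have h0 : 0 < σ - n := by linarith [Nat.ceil_lt_add_one hσ.le]
  have h1 : σ - n ≤ 1 := by linarith [Nat.le_ceil σ]
  obtain ⟨c, hc, hbound⟩ := exists_mul_exp_neg_le_norm_Gamma_of_le_one h0 h1
  refine ⟨(σ - n) ^ n * c, by positivity, fun z hz => ?_⟩
  have hre : (z - n).re = σ - n := by simp [hz]
  calc (σ - n) ^ n * c * Real.exp (-(π * |z.im|))
      = (z - n).re ^ n * (c * Real.exp (-(π * |(z - n).im|))) := by simp [hre, mul_assoc]
    _ ≤ (z - n).re ^ n * ‖Gamma (z - n)‖ := by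
        rw [hre]; gcongr; exact hbound _ hre
    _ ≤ ‖Gamma (z - n + n)‖ := re_pow_mul_norm_Gamma_le (hre ▸ h0) n
    _ = ‖Gamma z‖ := by rw [sub_add_cancel]

end Complex

lemma Real.sq_rpow {τ : ℝ} (hτ : 0 ≤ τ) (p : ℝ) : (τ ^ 2) ^ p = τ ^ (2 * p) := by
  rw [← Real.rpow_two, ← Real.rpow_mul hτ]

lemma Real.rpow_add_sq_div_two_le {τ : ℝ} (hτ : 0 < τ) (p : ℝ) :
    (τ + τ ^ 2 / 2) ^ p ≤ 2 ^ |p| * (τ ^ min p (2 * p) + τ ^ (2 * p)) := by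
  have hτp := Real.rpow_nonneg hτ.le p
  have hτ2p := Real.rpow_nonneg hτ.le (2 * p)
  rcases le_or_gt 0 p with hp | hp
  · have hmax : τ + τ ^ 2 / 2 ≤ 2 * max τ (τ ^ 2) := by
      nlinarith [le_max_left τ (τ ^ 2), le_max_right τ (τ ^ 2)]
    calc (τ + τ ^ 2 / 2) ^ p ≤ (2 * max τ (τ ^ 2)) ^ p := by gcongr
      _ = 2 ^ p * max (τ ^ p) (τ ^ (2 * p)) := by
        rw [Real.mul_rpow zero_le_two (by positivity), Real.rpow_max hτ.le (by positivity) hp,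
          Real.sq_rpow hτ.le]
      _ ≤ 2 ^ |p| * (τ ^ min p (2 * p) + τ ^ (2 * p)) := by
        rw [abs_of_nonneg hp, min_eq_left (by linarith)]
        gcongr
        exact max_le_add_of_nonneg hτp hτ2p
  · calc (τ + τ ^ 2 / 2) ^ p ≤ (τ ^ 2 / 2) ^ p :=
          Real.rpow_le_rpow_of_nonpos (by positivity) (by linarith) hp.le
      _ = 2 ^ |p| * τ ^ (2 * p) := by
        rw [Real.div_rpow (by positivity) zero_le_two, Real.sq_rpow hτ.le, abs_of_neg hp,
          Real.rpow_neg zero_le_two, div_eq_mul_inv, mul_comm]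
      _ ≤ 2 ^ |p| * (τ ^ min p (2 * p) + τ ^ (2 * p)) := by
        rw [min_eq_right (by linarith)]
        gcongr
        linarith

lemma Real.setIntegral_rpow_mul_exp_neg_mul_le {e q x : ℝ} (he : -1 < e) (heq : e ≤ q)
    (hx : 0 < x) (hx1 : x ≤ 1) :
    ∫ τ in Ioi 0, τ ^ e * Real.exp (-(x * τ)) ≤ Real.Gamma (e + 1) * x ^ (-(q + 1)) := by
  have h := Real.integral_rpow_mul_exp_neg_mul_Ioi (a := e + 1) (by linarith) hx
  simp only [add_sub_cancel_right] at h
  rw [h, mul_comm, one_div, Real.inv_rpow hx.le, ← Real.rpow_neg hx.le]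
  exact mul_le_mul_of_nonneg_left (Real.rpow_le_rpow_of_exponent_ge hx hx1 (by linarith))
    (Real.Gamma_pos_of_pos (by linarith)).le

lemma Real.integrableOn_rpow_mul_exp_neg_mul {e x : ℝ} (he : -1 < e) (hx : 0 < x) :
    IntegrableOn (fun τ : ℝ => τ ^ e * Real.exp (-(x * τ))) (Ioi 0) := by
  simpa using integrableOn_rpow_mul_exp_neg_mul_rpow he one_pos hx

lemma norm_setIntegral_exp_mul_cpow_le {s : ℂ} (hs : -(1 / 2) < s.re) {x : ℝ} (hx : 0 < x)
    (hx1 : x ≤ 1) :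
    ‖∫ τ in Ioi (0 : ℝ), (Real.exp (-x * τ) : ℂ) * ((τ : ℂ) + (τ : ℂ) ^ 2 / 2) ^ s‖
      ≤ 2 ^ |s.re| * (Real.Gamma (min s.re (2 * s.re) + 1) + Real.Gamma (2 * s.re + 1))
        * x ^ (-(2 * s.re + 1)) := by
  set p := s.re
  have he : -1 < min p (2 * p) := lt_min (by linarith) (by linarith)
  have h2p : -1 < 2 * p := by linarith
  have hint₁ := Real.integrableOn_rpow_mul_exp_neg_mul he hx
  have hint₂ := Real.integrableOn_rpow_mul_exp_neg_mul h2p hx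
  have hbound : ∀ᵐ τ ∂volume.restrict (Ioi 0),
      ‖(Real.exp (-x * τ) : ℂ) * ((τ : ℂ) + (τ : ℂ) ^ 2 / 2) ^ s‖
        ≤ 2 ^ |p| * (τ ^ min p (2 * p) * Real.exp (-(x * τ))
          + τ ^ (2 * p) * Real.exp (-(x * τ))) := by
    refine (ae_restrict_iff' measurableSet_Ioi).2 (.of_forall fun τ (hτ : 0 < τ) => ?_)
    have hcast : (τ : ℂ) + (τ : ℂ) ^ 2 / 2 = ((τ + τ ^ 2 / 2 : ℝ) : ℂ) := by push_cast; ring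
    rw [norm_mul, norm_real, Real.norm_of_nonneg (Real.exp_pos _).le, hcast,
      norm_cpow_eq_rpow_re_of_pos (by positivity), neg_mul]
    calc Real.exp (-(x * τ)) * (τ + τ ^ 2 / 2) ^ p
        ≤ Real.exp (-(x * τ)) * (2 ^ |p| * (τ ^ min p (2 * p) + τ ^ (2 * p))) := by
          gcongr; exact Real.rpow_add_sq_div_two_le hτ p
      _ = _ := by ring
  refine (norm_integral_le_of_norm_le ((hint₁.add hint₂).const_mul _) hbound).trans ?_
  rw [integral_const_mul]
  simp only [Pi.add_apply]
  rw [integral_add hint₁ hint₂, mul_assoc, add_mul]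
  gcongr
  · exact Real.setIntegral_rpow_mul_exp_neg_mul_le he (min_le_right _ _) hx hx1
  · exact Real.setIntegral_rpow_mul_exp_neg_mul_le h2p le_rfl hx hx1

lemma norm_besselK (ν : ℂ) {x : ℝ} (hx : 0 < x) :
    ‖besselK ν x‖ = √(π / 2) * x ^ ν.re * Real.exp (-x) / ‖Gamma (ν + 1 / 2)‖
      * ‖∫ τ in Ioi (0 : ℝ),
          (Real.exp (-x * τ) : ℂ) * ((τ : ℂ) + (τ : ℂ) ^ 2 / 2) ^ (ν - 1 / 2)‖ := by
  rw [besselK, norm_mul, norm_div, norm_mul, norm_mul, norm_cpow_eq_rpow_re_of_pos hx, norm_real,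
    norm_real, Real.norm_of_nonneg (Real.sqrt_nonneg _), Real.norm_of_nonneg (Real.exp_pos _).le]

theorem besselK_bound_small (a : ℝ) (ha : 0 < a) :
    ∃ C : ℝ, ∀ ν : ℂ, ν.re = a → ∀ x : ℝ, 0 < x → x ≤ 1 →
      ‖besselK ν x‖
        ≤ C * Real.exp (Real.pi * |ν.im|) * x ^ (-a) := by
  obtain ⟨c, hc, hΓ⟩ := exists_mul_exp_neg_le_norm_Gamma (σ := a + 1 / 2) (by linarith)
  set p := a - 1 / 2 with hp
  set M := 2 ^ |p| * (Real.Gamma (min p (2 * p) + 1) + Real.Gamma (2 * p + 1))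
  refine ⟨√(π / 2) / c * M, fun ν hν x hx hx1 => ?_⟩
  have hΓν : c * Real.exp (-(π * |ν.im|)) ≤ ‖Gamma (ν + 1 / 2)‖ := by
    simpa using hΓ (ν + 1 / 2) (by simp [hν])
  have hre : (ν - 1 / 2).re = p := by simp [hν, p]
  have hM := norm_setIntegral_exp_mul_cpow_le (s := ν - 1 / 2) (by rw [hre, hp]; linarith) hx hx1
  rw [hre] at hM
  have hexp_x : Real.exp (-x) ≤ 1 := Real.exp_le_one_iff.2 (by linarith)
  have hexp : a + -(2 * p + 1) = -a := by rw [hp]; ring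
  rw [norm_besselK ν hx, hν]
  calc _ ≤ √(π / 2) * x ^ a * 1 / (c * Real.exp (-(π * |ν.im|))) * (M * x ^ (-(2 * p + 1))) := by
        gcongr
    _ = √(π / 2) / c * M * Real.exp (π * |ν.im|) * x ^ (a + -(2 * p + 1)) := by
        rw [Real.exp_neg, Real.rpow_add hx]; field_simp
    _ = _ := by rw [hexp]
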